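/- Define u : (−∞,0] × [0,1] → ℝ by u(x,t) = (2−t)·(e^{4x/(2−t)} − 1). Then: (i) u is smooth on (−∞,0) × (0,1); (ii) u is convex in the joint variables (x,t); (iii) the determinant of the 2×2 Hessian of u in (x,t) vanishes identically on (−∞,0) × (0,1); (iv) u(x,0) = 2(e^{2x} − 1) and u(x,1) = e^{4x} − 1 for all x ≤ 0, and u(0,t) = 0 for all t ∈ [0,1]. -/

import Mathlib

/-- The geodesic of Example 2.3 in logarithmic coordinates:
`u(x,t) = (2-t)(e^{4x/(2-t)} - 1)`. -/
noncomputable def geo3 (x t : ℝ) : ℝ := (2 - t) * (Real.exp (4 * x / (2 - t)) - 1)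

/-- The determinant `u_{xx}u_{tt} - u_{xt}²` of the Hessian of a function of two
real variables. -/
noncomputable def hessDet2 (f : ℝ → ℝ → ℝ) (x t : ℝ) : ℝ :=
  deriv (fun a => deriv (fun b => f b t) a) x *
    deriv (fun a => deriv (fun b => f x b) a) t -
  (deriv (fun a => deriv (fun b => f b a) x) t) ^ 2

open Real Filter Topology

private lemma geo3_dx (t : ℝ) (h : (2:ℝ) - t ≠ 0) (x : ℝ) :
    HasDerivAt (fun b => geo3 b t) (4 * exp (4 * x / (2 - t))) x := by
  have h1 : HasDerivAt (fun b : ℝ => 4 * b / (2 - t)) (4 / (2 - t)) x := by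
    simpa using ((hasDerivAt_id x).const_mul 4).div_const (2 - t)
  have h2 := ((h1.exp).sub_const 1).const_mul (2 - t)
  refine h2.congr_deriv ?_
  field_simp

private lemma geo3_aux_d2 (x t : ℝ) (h : (2:ℝ) - t ≠ 0) :
    HasDerivAt (fun b : ℝ => 4 * x / (2 - b)) (4 * x / (2 - t) ^ 2) t := by
  have h1 : HasDerivAt (fun b : ℝ => 2 - b) (-1) t := by
    simpa using (hasDerivAt_id t).const_sub 2
  have := (hasDerivAt_const t (4 * x)).div h1 h
  refine this.congr_deriv ?_
  ring

private lemma geo3_dt (x t : ℝ) (h : (2:ℝ) - t ≠ 0) :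
    HasDerivAt (fun b => geo3 x b)
      ((4 * x / (2 - t)) * exp (4 * x / (2 - t)) - (exp (4 * x / (2 - t)) - 1)) t := by
  have h1 : HasDerivAt (fun b : ℝ => 2 - b) (-1) t := by
    simpa using (hasDerivAt_id t).const_sub 2
  have h3 := h1.mul (((geo3_aux_d2 x t h).exp).sub_const 1)
  refine h3.congr_deriv ?_
  field_simp; ring

private lemma geo3_ev_ne (t : ℝ) (ht : t ≠ 2) : ∀ᶠ a in 𝓝 t, (2:ℝ) - a ≠ 0 := by
  filter_upwards [eventually_ne_nhds ht] with a ha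
  exact sub_ne_zero.mpr (Ne.symm ha)

private lemma geo3_hess_zero (x t : ℝ) (ht : t ≠ 2) : hessDet2 geo3 x t = 0 := by
  have h : (2:ℝ) - t ≠ 0 := sub_ne_zero.mpr (Ne.symm ht)
  set E := exp (4 * x / (2 - t)) with hE
  have hxx : deriv (fun a => deriv (fun b => geo3 b t) a) x = 16 / (2 - t) * E := by
    have heq : (fun a => deriv (fun b => geo3 b t) a)
        = fun a => 4 * exp (4 * a / (2 - t)) := by
      funext a; exact (geo3_dx t h a).deriv
    rw [heq]
    have h1 : HasDerivAt (fun a : ℝ => 4 * a / (2 - t)) (4 / (2 - t)) x := by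
      simpa using ((hasDerivAt_id x).const_mul 4).div_const (2 - t)
    have := (h1.exp.const_mul 4).deriv
    rw [this, hE]; ring
  have htt : deriv (fun a => deriv (fun b => geo3 x b) a) t
      = 16 * x ^ 2 / (2 - t) ^ 3 * E := by
    have hev : (fun a => deriv (fun b => geo3 x b) a) =ᶠ[𝓝 t]
        fun a => (4 * x / (2 - a)) * exp (4 * x / (2 - a)) - (exp (4 * x / (2 - a)) - 1) := by
      filter_upwards [geo3_ev_ne t ht] with a ha
      exact (geo3_dt x a ha).deriv
    rw [hev.deriv_eq]
    have hc := geo3_aux_d2 x t h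
    have h3 : HasDerivAt (fun a => (4 * x / (2 - a)) * exp (4 * x / (2 - a)) - (exp (4 * x / (2 - a)) - 1)) _ t :=
      (hc.mul hc.exp).sub ((hc.exp).sub_const 1)
    rw [h3.deriv, hE]
    field_simp; ring
  have hxt : deriv (fun a => deriv (fun b => geo3 b a) x) t
      = 16 * x / (2 - t) ^ 2 * E := by
    have hev : (fun a => deriv (fun b => geo3 b a) x) =ᶠ[𝓝 t]
        fun a => 4 * exp (4 * x / (2 - a)) := by
      filter_upwards [geo3_ev_ne t ht] with a ha
      exact (geo3_dx a ha x).deriv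
    rw [hev.deriv_eq]
    have h3 := ((geo3_aux_d2 x t h).exp).const_mul 4
    rw [h3.deriv, hE]; ring
  rw [hessDet2, hxx, htt, hxt]
  field_simp
  ring

/-- Example 2.3: `u(x,t) = (2-t)(e^{4x/(2-t)} - 1)` is smooth on `(-∞,0) × (0,1)`,
convex in the joint variables, solves the homogeneous Monge-Ampère equation
`det D²u = 0`, and attains the boundary data `2(e^{2x}-1)`, `e^{4x}-1` and `0`. -/
theorem stmt15 :
    ContDiffOn ℝ (⊤ : ℕ∞) (fun p : ℝ × ℝ => geo3 p.1 p.2)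
      (Set.Iio (0 : ℝ) ×ˢ Set.Ioo (0 : ℝ) 1) ∧
    ConvexOn ℝ (Set.Iic (0 : ℝ) ×ˢ Set.Icc (0 : ℝ) 1)
      (fun p : ℝ × ℝ => geo3 p.1 p.2) ∧
    (∀ p ∈ Set.Iio (0 : ℝ) ×ˢ Set.Ioo (0 : ℝ) 1,
      hessDet2 geo3 p.1 p.2 = 0) ∧
    (∀ x : ℝ, x ≤ 0 →
      geo3 x 0 = 2 * (Real.exp (2 * x) - 1) ∧ geo3 x 1 = Real.exp (4 * x) - 1) ∧
    ∀ t ∈ Set.Icc (0 : ℝ) 1, geo3 0 t = 0 := by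
  refine ⟨?_, ?_, ?_, ?_, ?_⟩
  · -- smoothness
    have hne : ∀ p ∈ Set.Iio (0 : ℝ) ×ˢ Set.Ioo (0 : ℝ) 1, (2:ℝ) - p.2 ≠ 0 := by
      rintro ⟨x, t⟩ ⟨-, ht⟩
      have : t < 2 := lt_trans ht.2 (by norm_num)
      simp only
      intro hc
      linarith [sub_eq_zero.mp hc]
    have h1 : ContDiffOn ℝ (⊤ : ℕ∞) (fun p : ℝ × ℝ => (2:ℝ) - p.2)
        (Set.Iio (0 : ℝ) ×ˢ Set.Ioo (0 : ℝ) 1) :=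
      (contDiff_const.sub contDiff_snd).contDiffOn
    exact h1.mul ((((contDiff_const.mul contDiff_fst).contDiffOn.div h1 hne).exp).sub
      contDiffOn_const)
  · -- convexity
    refine ⟨(convex_Iic 0).prod (convex_Icc 0 1), ?_⟩
    rintro ⟨x1, t1⟩ ⟨-, ht1⟩ ⟨x2, t2⟩ ⟨-, ht2⟩ a b ha hb hab
    simp only [geo3]
    set s1 : ℝ := 2 - t1 with hs1
    set s2 : ℝ := 2 - t2 with hs2
    have ht1' : t1 ≤ 1 := ht1.2
    have ht2' : t2 ≤ 1 := ht2.2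
    have hs11 : (1:ℝ) ≤ s1 := by simp only [hs1]; linarith
    have hs21 : (1:ℝ) ≤ s2 := by simp only [hs2]; linarith
    have hs1p : (0:ℝ) < s1 := by linarith
    have hs2p : (0:ℝ) < s2 := by linarith
    have hsp : (0:ℝ) < a * s1 + b * s2 := by nlinarith
    set s : ℝ := a * s1 + b * s2 with hs
    have hw1 : (0:ℝ) ≤ a * s1 / s := by positivity
    have hw2 : (0:ℝ) ≤ b * s2 / s := by positivity
    have hws : a * s1 / s + b * s2 / s = 1 := by field_simp; rw [hs]
    have hkey := convexOn_exp.2 (Set.mem_univ (4 * x1 / s1)) (Set.mem_univ (4 * x2 / s2))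
      hw1 hw2 hws
    simp only [smul_eq_mul, Prod.fst_add, Prod.snd_add, Prod.smul_fst, Prod.smul_snd,
      smul_eq_mul] at hkey ⊢
    have harg : a * s1 / s * (4 * x1 / s1) + b * s2 / s * (4 * x2 / s2)
        = 4 * (a * x1 + b * x2) / s := by
      field_simp
    rw [harg] at hkey
    have h2 : (2:ℝ) - (a * t1 + b * t2) = s := by simp only [hs, hs1, hs2]; nlinarith
    rw [h2]
    have hmul := mul_le_mul_of_nonneg_left hkey hsp.le
    calc s * (exp (4 * (a * x1 + b * x2) / s) - 1)
        = s * exp (4 * (a * x1 + b * x2) / s) - s := by ring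
      _ ≤ s * (a * s1 / s * exp (4 * x1 / s1) + b * s2 / s * exp (4 * x2 / s2)) - s := by
          linarith
      _ = a * (s1 * (exp (4 * x1 / s1) - 1)) + b * (s2 * (exp (4 * x2 / s2) - 1)) := by
          field_simp
          ring
  · -- Monge–Ampère
    rintro ⟨x, t⟩ ⟨-, ht⟩
    exact geo3_hess_zero x t (by have := ht.2; intro hc; rw [hc] at this; norm_num at this)
  · -- boundary values in t = 0, 1
    intro x _
    constructor
    · have h4 : 4 * x / (2 - 0 : ℝ) = 2 * x := by ring
      simp only [geo3, h4]
      norm_num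
    · have h4 : 4 * x / (2 - 1 : ℝ) = 4 * x := by ring
      simp only [geo3, h4]
      norm_num
  · -- boundary value at x = 0
    intro t _
    simp [geo3]
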